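/- Let N ≥ 1, M > 0, x, y ∈ ℝ^N with all components in [0, M], let 0 < δ < M, and let F : K_x → K_y satisfy |d²(p,q) − d²(F(p), F(q))| ≤ 2δ for all p, q ∈ K_x. Then for every n ∈ {1,…,N} there exists m ∈ {1,…,N} such that F(□(n)) ⊆ □(m). -/

import Mathlib

noncomputable def box (M : ℝ) (n : ℕ) : Set (ℝ × ℝ) :=
  Set.Icc (4 * M + 10 * M * (n : ℝ)) (4 * M + 10 * M * (n : ℝ) + 2 * M) ×ˢ Set.Icc (-M) M

noncomputable def pp {N : ℕ} (M : ℝ) (z : Fin N → ℝ) (n : Fin N) : ℝ × ℝ :=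
  (10 * M * ((n : ℕ) : ℝ), z n)

noncomputable def pm {N : ℕ} (M : ℝ) (z : Fin N → ℝ) (n : Fin N) : ℝ × ℝ :=
  (10 * M * ((n : ℕ) : ℝ), -(z n))

noncomputable def Kset {N : ℕ} (M : ℝ) (z : Fin N → ℝ) : Set (ℝ × ℝ) :=
  ⋃ n : Fin N, ({pp M z n, pm M z n} ∪ box M n)

theorem pp_mem {N : ℕ} (M : ℝ) (z : Fin N → ℝ) (n : Fin N) : pp M z n ∈ Kset M z :=
  Set.mem_iUnion.mpr ⟨n, Or.inl (Set.mem_insert _ _)⟩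

theorem pm_mem {N : ℕ} (M : ℝ) (z : Fin N → ℝ) (n : Fin N) : pm M z n ∈ Kset M z :=
  Set.mem_iUnion.mpr ⟨n, Or.inl (Set.mem_insert_of_mem _ rfl)⟩

theorem Kset_compact {N : ℕ} (M : ℝ) (z : Fin N → ℝ) : IsCompact (Kset M z) := by
  apply isCompact_iUnion
  intro n
  exact ((Set.toFinite _).isCompact).union (isCompact_Icc.prod isCompact_Icc)

instance {N : ℕ} (M : ℝ) (z : Fin N → ℝ) : CompactSpace ↥(Kset M z) :=
  isCompact_iff_compactSpace.mp (Kset_compact M z)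

theorem Kset_nonempty {N : ℕ} (hN : 0 < N) (M : ℝ) (z : Fin N → ℝ) : (Kset M z).Nonempty :=
  ⟨pp M z ⟨0, hN⟩, pp_mem M z ⟨0, hN⟩⟩

/-! The corners `(a, -M)`, `(a, M)`, `(a + 2M, M)` of the square `□(n)` are pairwise `2M` apart,
so their images are pairwise distinct (`2M - 2δ > 0`), and every point of `□(n)` is mapped within
`2M + 2δ < 4M` of the image of the first corner. The pieces of `K_y` (the squares and the pairs
`{p_m^+, p_m^-}`) are pairwise at least `4M` apart, already in the first coordinate, so the image of
`□(n)` lies in a single piece; that piece contains three distinct points, so it is a square. -/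

open Set

def column {N : ℕ} (M : ℝ) (z : Fin N → ℝ) (m : Fin N) : Set (ℝ × ℝ) :=
  {pp M z m, pm M z m}

lemma abs_fst_sub_le_dist (p q : ℝ × ℝ) : |p.1 - q.1| ≤ dist p q := by
  rw [Prod.dist_eq, ← Real.dist_eq]
  exact le_max_left _ _

lemma mem_box_iff {M : ℝ} {m : ℕ} {p : ℝ × ℝ} :
    p ∈ box M m ↔ p.1 - 10 * M * m ∈ Icc (4 * M) (6 * M) ∧ p.2 ∈ Icc (-M) M := by
  simp only [box, mem_prod, mem_Icc]
  constructor <;> rintro ⟨⟨h1, h2⟩, h3⟩ <;> exact ⟨⟨by linarith, by linarith⟩, h3⟩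

lemma fst_mem_column {N : ℕ} {M : ℝ} {z : Fin N → ℝ} {m : Fin N} {p : ℝ × ℝ}
    (hp : p ∈ column M z m) : p.1 = 10 * M * (m : ℕ) := by
  rcases hp with rfl | rfl <;> rfl

lemma mem_column_or_mem_box {N : ℕ} {M : ℝ} {z : Fin N → ℝ} {p : ℝ × ℝ} (hp : p ∈ Kset M z) :
    ∃ m : Fin N, p ∈ column M z m ∨ p ∈ box M m := by
  simpa [Kset, column] using hp

lemma dist_le_of_mem_box {M : ℝ} {m : ℕ} {p q : ℝ × ℝ} (hp : p ∈ box M m) (hq : q ∈ box M m) :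
    dist p q ≤ 2 * M := by
  rw [mem_box_iff, mem_Icc, mem_Icc] at hp hq
  rw [Prod.dist_eq, Real.dist_eq, Real.dist_eq]
  refine max_le (abs_sub_le_iff.2 ⟨?_, ?_⟩) (abs_sub_le_iff.2 ⟨?_, ?_⟩) <;> linarith

lemma four_mul_le_dist_of_ne {M : ℝ} (hM : 0 ≤ M) {k l : ℕ} (hkl : k ≠ l) {p q : ℝ × ℝ}
    (hp : p.1 - 10 * M * k ∈ Icc 0 (6 * M)) (hq : q.1 - 10 * M * l ∈ Icc 0 (6 * M)) :
    4 * M ≤ dist p q := by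
  refine le_trans ?_ (abs_fst_sub_le_dist p q)
  rw [mem_Icc] at hp hq
  rcases hkl.lt_or_gt with h | h
  · have : (k : ℝ) + 1 ≤ l := by exact_mod_cast h
    rw [abs_sub_comm, le_abs]
    left
    nlinarith
  · have : (l : ℝ) + 1 ≤ k := by exact_mod_cast h
    rw [le_abs]
    left
    nlinarith

lemma four_mul_le_dist_of_mem_column_of_mem_box {N : ℕ} {M : ℝ} {z : Fin N → ℝ} {m : Fin N}
    {p q : ℝ × ℝ} (hp : p ∈ column M z m) (hq : q ∈ box M m) : 4 * M ≤ dist p q := by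
  refine le_trans ?_ (abs_fst_sub_le_dist q p |>.trans_eq (dist_comm q p))
  rw [fst_mem_column hp]
  rw [mem_box_iff, mem_Icc] at hq
  exact le_abs.2 (Or.inl hq.1.1)

lemma fst_sub_mem_Icc_of_mem_box {M : ℝ} (hM : 0 ≤ M) {m : ℕ} {p : ℝ × ℝ} (hp : p ∈ box M m) :
    p.1 - 10 * M * m ∈ Icc 0 (6 * M) :=
  Icc_subset_Icc (by linarith) le_rfl (mem_box_iff.1 hp).1

lemma fst_sub_mem_Icc_of_mem_column {N : ℕ} {M : ℝ} (hM : 0 ≤ M) {z : Fin N → ℝ} {m : Fin N}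
    {p : ℝ × ℝ} (hp : p ∈ column M z m) : p.1 - 10 * M * (m : ℕ) ∈ Icc 0 (6 * M) := by
  rw [fst_mem_column hp, sub_self]
  exact ⟨le_rfl, by linarith⟩

lemma mem_box_of_dist_lt {N : ℕ} {M : ℝ} (hM : 0 ≤ M) {z : Fin N → ℝ} {m : Fin N}
    {p q : ℝ × ℝ} (hp : p ∈ Kset M z) (hq : q ∈ box M m) (hpq : dist p q < 4 * M) :
    p ∈ box M m := by
  have hq' := fst_sub_mem_Icc_of_mem_box hM hq
  obtain ⟨k, hk | hk⟩ := mem_column_or_mem_box hp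
  · refine absurd hpq (not_lt.2 ?_)
    obtain rfl | hkm := eq_or_ne k m
    · exact four_mul_le_dist_of_mem_column_of_mem_box hk hq
    · exact four_mul_le_dist_of_ne hM (Fin.val_injective.ne hkm)
        (fst_sub_mem_Icc_of_mem_column hM hk) hq'
  · obtain rfl | hkm := eq_or_ne k m
    · exact hk
    · exact absurd hpq (not_lt.2 (four_mul_le_dist_of_ne hM (Fin.val_injective.ne hkm)
        (fst_sub_mem_Icc_of_mem_box hM hk) hq'))

lemma mem_column_of_dist_lt {N : ℕ} {M : ℝ} (hM : 0 ≤ M) {z : Fin N → ℝ} {m : Fin N}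
    {p q : ℝ × ℝ} (hp : p ∈ Kset M z) (hq : q ∈ column M z m) (hpq : dist p q < 4 * M) :
    p ∈ column M z m := by
  have hq' := fst_sub_mem_Icc_of_mem_column hM hq
  obtain ⟨k, hk | hk⟩ := mem_column_or_mem_box hp
  · obtain rfl | hkm := eq_or_ne k m
    · exact hk
    · exact absurd hpq (not_lt.2 (four_mul_le_dist_of_ne hM (Fin.val_injective.ne hkm)
        (fst_sub_mem_Icc_of_mem_column hM hk) hq'))
  · refine absurd hpq (not_lt.2 ?_)
    obtain rfl | hkm := eq_or_ne k m
    · exact dist_comm p q ▸ four_mul_le_dist_of_mem_column_of_mem_box hq hk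
    · exact four_mul_le_dist_of_ne hM (Fin.val_injective.ne hkm)
        (fst_sub_mem_Icc_of_mem_box hM hk) hq'

lemma exists_three_mem_box {M : ℝ} (hM : 0 ≤ M) (n : ℕ) :
    ∃ a b c : ℝ × ℝ, a ∈ box M n ∧ b ∈ box M n ∧ c ∈ box M n ∧
      2 * M ≤ dist a b ∧ 2 * M ≤ dist a c ∧ 2 * M ≤ dist b c := by
  set t : ℝ := 4 * M + 10 * M * n
  refine ⟨(t, -M), (t, M), (t + 2 * M, M), ?_, ?_, ?_, ?_, ?_, ?_⟩
  all_goals simp only [box, mem_prod, mem_Icc, Prod.dist_eq, Real.dist_eq, le_max_iff, le_abs]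
  all_goals first
    | exact ⟨⟨by linarith, by linarith⟩, by linarith, by linarith⟩
    | exact Or.inr (Or.inr (by linarith))
    | exact Or.inl (Or.inr (by linarith))

lemma false_of_mem_pair_of_pairwise_ne {α : Type*} {u v a b c : α} (ha : a ∈ ({u, v} : Set α))
    (hb : b ∈ ({u, v} : Set α)) (hc : c ∈ ({u, v} : Set α)) (hab : a ≠ b) (hac : a ≠ c)
    (hbc : b ≠ c) : False := by
  rcases ha with rfl | rfl <;> rcases hb with rfl | rfl <;> rcases hc with rfl | rfl <;>
    contradiction

theorem step1_image_of_box_subset_box_general {N : ℕ} {M : ℝ} (hM : 0 < M)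
    (x y : Fin N → ℝ)
    {δ : ℝ} (hδM : δ < M)
    (F : ↥(Kset M x) → ↥(Kset M y))
    (hF : ∀ p q : ↥(Kset M x), |dist p q - dist (F p) (F q)| ≤ 2 * δ) :
    ∀ n : Fin N, ∃ m : Fin N,
      ∀ p : ↥(Kset M x), (p : ℝ × ℝ) ∈ box M n → (F p : ℝ × ℝ) ∈ box M m := by
  have hF_lt : ∀ p q : Kset M x, dist (p : ℝ × ℝ) q ≤ 2 * M → dist (F p : ℝ × ℝ) (F q) < 4 * M :=
    fun p q h ↦ by
      linarith [(abs_le.1 (hF p q)).1, Subtype.dist_eq p q, Subtype.dist_eq (F p) (F q)]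
  have hF_ne : ∀ p q : Kset M x, 2 * M ≤ dist (p : ℝ × ℝ) q → (F p : ℝ × ℝ) ≠ F q :=
    fun p q h ↦ dist_pos.1 <| by
      linarith [(abs_le.1 (hF p q)).2, Subtype.dist_eq p q, Subtype.dist_eq (F p) (F q)]
  intro n
  obtain ⟨a, b, c, ha, hb, hc, hab, hac, hbc⟩ := exists_three_mem_box hM.le n
  have hbox : box M n ⊆ Kset M x := subset_iUnion_of_subset n subset_union_right
  lift a to Kset M x using hbox ha
  lift b to Kset M x using hbox hb
  lift c to Kset M x using hbox hc
  obtain ⟨m, hm | hm⟩ := mem_column_or_mem_box (F a).2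
  · exfalso
    have hF_mem : ∀ p : Kset M x, (p : ℝ × ℝ) ∈ box M n → (F p : ℝ × ℝ) ∈ column M y m :=
      fun p hp ↦ mem_column_of_dist_lt hM.le (F p).2 hm
        ((dist_comm _ _).trans_lt (hF_lt a p (dist_le_of_mem_box ha hp)))
    exact false_of_mem_pair_of_pairwise_ne (hF_mem a ha) (hF_mem b hb) (hF_mem c hc)
      (hF_ne a b hab) (hF_ne a c hac) (hF_ne b c hbc)
  · exact ⟨m, fun p hp ↦ mem_box_of_dist_lt hM.le (F p).2 hm (hF_lt p a (dist_le_of_mem_box hp ha))⟩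

/-- Step 1: each square is mapped into a single square by a 2δ-isometric map. -/
theorem step1_image_of_box_subset_box {N : ℕ} (hN : 0 < N) {M : ℝ} (hM : 0 < M)
    (x y : Fin N → ℝ) (hx : ∀ n, x n ∈ Set.Icc (0 : ℝ) M) (hy : ∀ n, y n ∈ Set.Icc (0 : ℝ) M)
    {δ : ℝ} (hδ0 : 0 < δ) (hδM : δ < M)
    (F : ↥(Kset M x) → ↥(Kset M y))
    (hF : ∀ p q : ↥(Kset M x), |dist p q - dist (F p) (F q)| ≤ 2 * δ) :
    ∀ n : Fin N, ∃ m : Fin N,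
      ∀ p : ↥(Kset M x), (p : ℝ × ℝ) ∈ box M n → (F p : ℝ × ℝ) ∈ box M m :=
  step1_image_of_box_subset_box_general hM x y hδM F hF
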